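/- (Probabilistic correctness of the union operation.) Let v, w : Fin N → ℝ≥0 be weighted sets, let i ∈ Fin N, and suppose N_W > 2 · |supp(v) ∪ supp(w)|. If the family H = (h_1,…,h_{N_D}) is drawn uniformly at random in the random-hash model, then the probability that CM_H(i, S_H(v) + S_H(w)) ≠ v i + w i is at most 1 / 2^{N_D}, where S_H(v) + S_H(w) is the entrywise sum of the two sketches. -/

import Mathlib

/-!
If no other element of the combined support `supp v ∪ supp w` collides with `i` under `h_j`,
then row `j` of the (additive) sketch reads off exactly `v i + w i`; since every row
overestimates, the count-min lookup is then exact. A fixed `k ≠ i` collides with `i` with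
probability `1 / N_W`, so by the union bound a row is spoiled with probability at most
`|supp v ∪ supp w| / N_W < 1 / 2`, and the rows are independent.
-/

open Finset

/-- The primitive sketch of a weighted set `v` under hash function `h`. -/
def sketch {N NW : ℕ} (h : Fin N → Fin NW) (v : Fin N → NNReal) : Fin NW → NNReal :=
  fun k => ∑ i ∈ Finset.univ.filter (fun i => h i = k), v i

/-- The support of a weighted set, as a finset. -/
noncomputable def supp {N : ℕ} (v : Fin N → NNReal) : Finset (Fin N) :=
  Finset.univ.filter (fun i => v i ≠ 0)

/-- The count-min sketch of `v` under the family `H`: the `j`-th row is the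
primitive sketch of `v` under `H j`. -/
def cmSketch {N NW ND : ℕ} (H : Fin ND → Fin N → Fin NW) (v : Fin N → NNReal) :
    Fin ND → Fin NW → NNReal :=
  fun j => sketch (H j) v

/-- The count-min lookup of `i` in an `ND × NW` matrix `M`, relative to the
family `H`: the minimum over `j` of `M[j, h_j(i)]`. -/
noncomputable def cmLookup {N NW ND : ℕ} (H : Fin ND → Fin N → Fin NW)
    (M : Fin ND → Fin NW → NNReal) (i : Fin N) : NNReal :=
  ⨅ j, M j (H j i)

section Collisions

variable {α β : Type*} [Fintype α] [DecidableEq α] [Fintype β] [DecidableEq β]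

def collidingHashes (S : Finset α) (i : α) : Finset (α → β) :=
  univ.filter fun h => ∃ k ∈ S, h k = h i

/-- `h` is recovered from `h k` and from `h` with its value at `k` reset to `h i`. -/
def updateCollisionEquiv {k i : α} (hki : k ≠ i) : {h : α → β // h k = h i} × β ≃ (α → β) where
  toFun p := Function.update p.1.1 k p.2
  invFun h := (⟨Function.update h k (h i), by simp [hki.symm]⟩, h k)
  left_inv := fun ⟨⟨g, hg⟩, c⟩ => by
    ext x
    · simp [Function.update_of_ne hki.symm, ← hg]
    · simp
  right_inv h := by simp

theorem card_filter_apply_eq_apply_mul_card {k i : α} (hki : k ≠ i) :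
    (univ.filter fun h : α → β => h k = h i).card * Fintype.card β =
      Fintype.card β ^ Fintype.card α := by
  rw [← Fintype.card_subtype, ← Fintype.card_prod, Fintype.card_congr (updateCollisionEquiv hki),
    Fintype.card_fun]

theorem card_collidingHashes_mul_card_le {S : Finset α} {i : α} (hi : i ∉ S) :
    (collidingHashes S i : Finset (α → β)).card * Fintype.card β ≤
      S.card * Fintype.card β ^ Fintype.card α := by
  have hsub : collidingHashes S i ⊆
      S.biUnion fun k => univ.filter fun h : α → β => h k = h i := by
    intro h hh
    obtain ⟨k, hk, hcol⟩ := (mem_filter.mp hh).2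
    exact mem_biUnion.mpr ⟨k, hk, by simpa using hcol⟩
  calc (collidingHashes S i).card * Fintype.card β
      ≤ (∑ k ∈ S, (univ.filter fun h : α → β => h k = h i).card) * Fintype.card β :=
        Nat.mul_le_mul_right _ ((card_le_card hsub).trans card_biUnion_le)
    _ = S.card * Fintype.card β ^ Fintype.card α := by
        rw [sum_mul, sum_const_nat fun k hk =>
          card_filter_apply_eq_apply_mul_card (ne_of_mem_of_not_mem hk hi)]

theorem card_collidingHashes_div_le {S : Finset α} {i : α} (hi : i ∉ S) :
    ((collidingHashes S i : Finset (α → β)).card : ℝ) / Fintype.card (α → β) ≤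
      S.card / Fintype.card β := by
  have : Nonempty α := ⟨i⟩
  rw [Fintype.card_fun]
  rcases (Fintype.card β).eq_zero_or_pos with hβ | hβ
  · simp [hβ]
  rw [div_le_div_iff₀ (by positivity) (by positivity)]
  exact_mod_cast card_collidingHashes_mul_card_le hi

end Collisions

theorem card_piFinset_const_div_card {ι γ : Type*} [Fintype ι] [DecidableEq ι] [Fintype γ]
    (s : Finset γ) :
    ((Fintype.piFinset fun _ : ι => s).card : ℝ) / Fintype.card (ι → γ) =
      ((s.card : ℝ) / Fintype.card γ) ^ Fintype.card ι := by
  rw [Fintype.card_piFinset, prod_const, card_univ, Fintype.card_fun]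
  push_cast
  rw [div_pow]

section CountMin

variable {N NW ND : ℕ}

theorem supp_add (v w : Fin N → NNReal) : supp (v + w) = supp v ∪ supp w := by
  ext k
  simp only [supp, mem_filter, mem_union, mem_univ, true_and, Pi.add_apply, ne_eq, add_eq_zero,
    not_and_or]

theorem sketch_add (h : Fin N → Fin NW) (v w : Fin N → NNReal) :
    sketch h (v + w) = sketch h v + sketch h w := by
  ext k
  simp [sketch, sum_add_distrib]

theorem cmSketch_add (H : Fin ND → Fin N → Fin NW) (v w : Fin N → NNReal) :
    cmSketch H v + cmSketch H w = cmSketch H (v + w) := by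
  ext j : 1
  exact (sketch_add (H j) v w).symm

theorem le_sketch_apply_self (h : Fin N → Fin NW) (v : Fin N → NNReal) (i : Fin N) :
    v i ≤ sketch h v (h i) :=
  single_le_sum (fun _ _ => zero_le) (by simp)

theorem sketch_apply_self_of_forall_ne (h : Fin N → Fin NW) (v : Fin N → NNReal) (i : Fin N)
    (hcol : ∀ k ∈ (supp v).erase i, h k ≠ h i) : sketch h v (h i) = v i := by
  refine sum_eq_single_of_mem i (by simp) fun k hk hki => ?_
  by_contra hvk
  exact hcol k (mem_erase.mpr ⟨hki, by simpa [supp] using hvk⟩) (mem_filter.mp hk).2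

theorem cmLookup_cmSketch_of_forall_ne (H : Fin ND → Fin N → Fin NW) (v : Fin N → NNReal)
    (i : Fin N) (j : Fin ND) (hcol : ∀ k ∈ (supp v).erase i, H j k ≠ H j i) :
    cmLookup H (cmSketch H v) i = v i := by
  have : Nonempty (Fin ND) := ⟨j⟩
  refine le_antisymm ?_ (le_ciInf fun j' => le_sketch_apply_self (H j') v i)
  calc cmLookup H (cmSketch H v) i ≤ sketch (H j) v (H j i) := ciInf_le (OrderBot.bddBelow _) j
    _ = v i := sketch_apply_self_of_forall_ne (H j) v i hcol

theorem mem_collidingHashes_of_cmLookup_ne {H : Fin ND → Fin N → Fin NW}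
    {v : Fin N → NNReal} {i : Fin N} (hne : cmLookup H (cmSketch H v) i ≠ v i) (j : Fin ND) :
    H j ∈ collidingHashes ((supp v).erase i) i := by
  by_contra hj
  refine hne (cmLookup_cmSketch_of_forall_ne H v i j fun k hk hcol => hj ?_)
  simp only [collidingHashes, mem_filter, mem_univ, true_and]
  exact ⟨k, hk, hcol⟩

end CountMin

theorem prob_cmLookup_sum_err_le_general
    {N NW ND : ℕ}
    (v w : Fin N → NNReal) (i : Fin N)
    (hW : 2 * (supp v ∪ supp w).card < NW) :
    ((Finset.univ.filter (fun H : Fin ND → Fin N → Fin NW =>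
        cmLookup H (cmSketch H v + cmSketch H w) i ≠ v i + w i)).card : ℝ)
      / (Fintype.card (Fin ND → Fin N → Fin NW) : ℝ)
      ≤ 1 / 2 ^ ND := by
  set S := (supp (v + w)).erase i
  have hsub : (univ.filter fun H : Fin ND → Fin N → Fin NW =>
      cmLookup H (cmSketch H v + cmSketch H w) i ≠ v i + w i) ⊆
      Fintype.piFinset fun _ => collidingHashes S i := by
    intro H hH
    rw [mem_filter, cmSketch_add] at hH
    exact Fintype.mem_piFinset.mpr (mem_collidingHashes_of_cmLookup_ne hH.2)
  have hrow : ((collidingHashes S i : Finset (Fin N → Fin NW)).card : ℝ) /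
      Fintype.card (Fin N → Fin NW) ≤ 1 / 2 := by
    have hS : 2 * S.card < NW := lt_of_le_of_lt
      (Nat.mul_le_mul_left 2 (supp_add v w ▸ card_erase_le)) hW
    refine (card_collidingHashes_div_le (notMem_erase i _)).trans ?_
    rw [Fintype.card_fin, div_le_div_iff₀ (by exact_mod_cast (by omega : 0 < NW)) two_pos]
    exact_mod_cast (by omega : S.card * 2 ≤ 1 * NW)
  calc _ ≤ ((Fintype.piFinset fun _ : Fin ND => collidingHashes S i).card : ℝ) /
          Fintype.card (Fin ND → Fin N → Fin NW) := by gcongr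
    _ = _ := card_piFinset_const_div_card _
    _ ≤ (1 / 2) ^ ND := by rw [Fintype.card_fin]; gcongr
    _ = 1 / 2 ^ ND := by rw [one_div_pow]

/-- Probabilistic correctness of the union operation: if
`NW > 2 * |supp v ∪ supp w|` and the family `H` is drawn uniformly at random,
the probability that `CM_H(i, S_H(v) + S_H(w)) ≠ v i + w i` is at most
`1 / 2 ^ ND`, where `S_H(v) + S_H(w)` is the entrywise sum of sketches. -/
theorem prob_cmLookup_sum_err_le
    {N NW ND : ℕ} (hN : 0 < N) (hNW : 0 < NW) (hND : 0 < ND)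
    (v w : Fin N → NNReal) (i : Fin N)
    (hW : 2 * (supp v ∪ supp w).card < NW) :
    ((Finset.univ.filter (fun H : Fin ND → Fin N → Fin NW =>
        cmLookup H (cmSketch H v + cmSketch H w) i ≠ v i + w i)).card : ℝ)
      / (Fintype.card (Fin ND → Fin N → Fin NW) : ℝ)
      ≤ 1 / 2 ^ ND :=
  prob_cmLookup_sum_err_le_general v w i hW
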